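/- Let C = {(t, g(t)) : t ∈ [0,1]} be the graph of a continuous convex function g : [0,1] → ℝ, and let f : C → ℂ. Then var(f, C) ≤ pvar(f, C) ≤ 2·var(f, C), where var is the two-dimensional variation and pvar is the variation along the parameterization γ(t) = (t, g(t)). -/

import Mathlib

open scoped ENNReal NNReal

/-- Cross product of two planar vectors. -/
def crossR (v w : ℝ × ℝ) : ℝ := v.1 * w.2 - v.2 * w.1

/-- Signed side of the point `x` relative to the line through `u` with direction `v`. -/
def sideR (u v x : ℝ × ℝ) : ℝ := crossR v (x - u)

/-- The segment `[x i, x (i+1)]` is a crossing segment of the list `x` on the line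
through `u` with direction `v`. -/
def CrossSeg {n : ℕ} (u v : ℝ × ℝ) (x : Fin (n+1) → ℝ × ℝ) (i : Fin n) : Prop :=
  (sideR u v (x i.castSucc) * sideR u v (x i.succ) < 0) ∨
  ((i : ℕ) = 0 ∧ sideR u v (x i.castSucc) = 0) ∨
  (sideR u v (x i.castSucc) ≠ 0 ∧ sideR u v (x i.succ) = 0)

/-- Number of crossing segments of a list on a given line. -/
noncomputable def vfLine {n : ℕ} (u v : ℝ × ℝ) (x : Fin (n+1) → ℝ × ℝ) : ℕ :=
  Nat.card {i : Fin n // CrossSeg u v x i}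

/-- Variation factor of a list: the maximum of `vfLine` over all lines. -/
noncomputable def vf {n : ℕ} (x : Fin (n+1) → ℝ × ℝ) : ℕ :=
  sSup {m : ℕ | ∃ u v : ℝ × ℝ, v ≠ 0 ∧ m = vfLine u v x}

/-- Curve variation of `f` along a list of points. -/
noncomputable def cvar {n : ℕ} (f : ℝ × ℝ → ℂ) (x : Fin (n+1) → ℝ × ℝ) : ℝ :=
  ∑ i : Fin n, ‖f (x i.succ) - f (x i.castSucc)‖

/-- Two-dimensional variation of `f` on `σ`. -/
noncomputable def twoVar (f : ℝ × ℝ → ℂ) (σ : Set (ℝ × ℝ)) : ℝ≥0∞ :=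
  ⨆ (n : ℕ) (x : Fin (n+1) → ℝ × ℝ) (_ : ∀ i, x i ∈ σ)
    (_ : ∀ i : Fin n, x i.castSucc ≠ x i.succ),
    ENNReal.ofReal (cvar f x) / (vf x : ℝ≥0∞)

/-! Sort the abscissae of all points involved into a grid. The jump of `f` across a segment
telescopes into grid steps, and if every point is straddled by at most `K` segments, each grid step
is used at most `K` times, so the jumps along the list add up to at most `K` times the variation.
For a list on `C`, vertical lines give `K ≤ vf`. For a monotone parameter sequence `K = 1`, and the
list of its distinct grid points has `vf ≤ 2`, because along a convex graph each closed or open side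
of a line is met by an interval of parameters, so a line is crossed at most twice. -/

open Finset

section Grid

variable {α E : Type*} [LinearOrder α] [PseudoEMetricSpace E]

lemma Finset.exists_strictMonoOn_image_Iic_eq (T : Finset α) (hT : T.Nonempty) :
    ∃ (N : ℕ) (σ : ℕ → α), StrictMonoOn σ (Set.Iic N) ∧ σ '' Set.Iic N = T := by
  obtain ⟨N, hN⟩ : ∃ N, T.card = N + 1 := Nat.exists_eq_succ_of_ne_zero hT.card_pos.ne'
  let e := T.orderEmbOfFin hN
  refine ⟨N, fun j => e ⟨min j N, by omega⟩, fun j hj k hk hjk => ?_, ?_⟩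
  · simp only [Set.mem_Iic] at hj hk
    exact e.strictMono (Fin.mk_lt_mk.2 (by omega))
  · rw [← T.range_orderEmbOfFin hN]
    ext a
    constructor
    · rintro ⟨j, -, rfl⟩
      exact ⟨_, rfl⟩
    · rintro ⟨⟨j, hj⟩, rfl⟩
      exact ⟨j, Nat.lt_succ_iff.1 hj, by simp [e, Nat.min_eq_left (Nat.lt_succ_iff.1 hj)]⟩

lemma edist_le_sum_edist_grid (F : α → E) {N : ℕ} {σ : ℕ → α}
    (hσ : StrictMonoOn σ (Set.Iic N)) {a b : α} (ha : a ∈ σ '' Set.Iic N)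
    (hb : b ∈ σ '' Set.Iic N) :
    edist (F b) (F a) ≤ ∑ j ∈ range N,
      if min a b ≤ σ j ∧ σ (j + 1) ≤ max a b then edist (F (σ (j + 1))) (F (σ j)) else 0 := by
  wlog hab : a ≤ b generalizing a b
  · rw [edist_comm, min_comm, max_comm]
    exact this hb ha (le_of_not_ge hab)
  obtain ⟨p, hp, rfl⟩ := ha
  obtain ⟨q, hq, rfl⟩ := hb
  rw [min_eq_left hab, max_eq_right hab, ← Finset.sum_filter, edist_comm]
  calc edist (F (σ p)) (F (σ q))
      ≤ ∑ j ∈ Ico p q, edist (F (σ j)) (F (σ (j + 1))) :=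
        edist_le_Ico_sum_edist (F ∘ σ) ((hσ.le_iff_le hp hq).1 hab)
    _ = ∑ j ∈ Ico p q, edist (F (σ (j + 1))) (F (σ j)) :=
        Finset.sum_congr rfl fun j _ => edist_comm _ _
    _ ≤ ∑ j ∈ range N with σ p ≤ σ j ∧ σ (j + 1) ≤ σ q, edist (F (σ (j + 1))) (F (σ j)) := by
        refine Finset.sum_le_sum_of_subset fun j hj => ?_
        simp only [Finset.mem_Ico] at hj
        simp only [Set.mem_Iic] at hp hq
        have hj' : j ∈ Set.Iic N := Set.mem_Iic.2 (by omega)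
        have hj1 : j + 1 ∈ Set.Iic N := Set.mem_Iic.2 (by omega)
        simp only [Finset.mem_filter, Finset.mem_range]
        exact ⟨by omega, hσ.monotoneOn hp hj' hj.1,
          hσ.monotoneOn hj1 hq (by omega)⟩

lemma Monotone.card_straddle_le_one {u : ℕ → α} (hu : Monotone u) (n : ℕ) (c : α) :
    #{i ∈ range n | min (u i) (u (i + 1)) < c ∧ c < max (u i) (u (i + 1))} ≤ 1 := by
  have key : ∀ i j, c < u (i + 1) → u j < c → ¬ i < j := fun i j hi hj hij =>
    lt_irrefl c ((hi.trans_le (hu hij)).trans hj)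
  refine Finset.card_le_one.2 fun i hi j hj => ?_
  rw [Finset.mem_filter, min_eq_left (hu i.le_succ), max_eq_right (hu i.le_succ)] at hi
  rw [Finset.mem_filter, min_eq_left (hu j.le_succ), max_eq_right (hu j.le_succ)] at hj
  exact le_antisymm (not_lt.1 (key j i hj.2.2 hi.2.1)) (not_lt.1 (key i j hi.2.2 hj.2.1))

variable [DenselyOrdered α]

lemma sum_edist_le_mul_sum_edist_grid {ι : Type*} (F : α → E) (I : Finset ι) (a b : ι → α)
    {N : ℕ} {σ : ℕ → α} (hσ : StrictMonoOn σ (Set.Iic N))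
    (ha : ∀ i ∈ I, a i ∈ σ '' Set.Iic N) (hb : ∀ i ∈ I, b i ∈ σ '' Set.Iic N) (K : ℕ)
    (hK : ∀ c, #{i ∈ I | min (a i) (b i) < c ∧ c < max (a i) (b i)} ≤ K) :
    ∑ i ∈ I, edist (F (b i)) (F (a i)) ≤ K * ∑ j ∈ range N, edist (F (σ (j + 1))) (F (σ j)) := by
  have hcover : ∀ j ∈ range N,
      #{i ∈ I | min (a i) (b i) ≤ σ j ∧ σ (j + 1) ≤ max (a i) (b i)} ≤ K := by
    intro j hj
    rw [Finset.mem_range] at hj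
    obtain ⟨c, hjc, hcj⟩ := exists_between
      (hσ (Set.mem_Iic.2 hj.le) (Set.mem_Iic.2 hj) (Nat.lt_succ_self j))
    refine le_trans (Finset.card_le_card fun i hi => ?_) (hK c)
    simp only [Finset.mem_filter] at hi ⊢
    exact ⟨hi.1, hi.2.1.trans_lt hjc, hcj.trans_le hi.2.2⟩
  calc ∑ i ∈ I, edist (F (b i)) (F (a i))
      ≤ ∑ i ∈ I, ∑ j ∈ range N, if min (a i) (b i) ≤ σ j ∧ σ (j + 1) ≤ max (a i) (b i)
          then edist (F (σ (j + 1))) (F (σ j)) else 0 :=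
        Finset.sum_le_sum fun i hi => edist_le_sum_edist_grid F hσ (ha i hi) (hb i hi)
    _ = ∑ j ∈ range N, (#{i ∈ I | min (a i) (b i) ≤ σ j ∧ σ (j + 1) ≤ max (a i) (b i)} : ℝ≥0∞)
          * edist (F (σ (j + 1))) (F (σ j)) := by
        rw [Finset.sum_comm]
        refine Finset.sum_congr rfl fun j _ => ?_
        rw [← Finset.sum_filter, Finset.sum_const, nsmul_eq_mul]
    _ ≤ ∑ j ∈ range N, (K : ℝ≥0∞) * edist (F (σ (j + 1))) (F (σ j)) := by
        gcongr with j hj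
        exact_mod_cast hcover j hj
    _ = K * ∑ j ∈ range N, edist (F (σ (j + 1))) (F (σ j)) := (Finset.mul_sum _ _ _).symm

end Grid

section VariationFactor

variable {n : ℕ}

lemma vfLine_le (u v : ℝ × ℝ) (x : Fin (n + 1) → ℝ × ℝ) : vfLine u v x ≤ n := by
  simpa [vfLine] using Finite.card_subtype_le (CrossSeg u v x)

lemma vfLine_le_vf {u v : ℝ × ℝ} (hv : v ≠ 0) (x : Fin (n + 1) → ℝ × ℝ) :
    vfLine u v x ≤ vf x :=
  le_csSup ⟨n, by rintro _ ⟨u', v', -, rfl⟩; exact vfLine_le u' v' x⟩ ⟨u, v, hv, rfl⟩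

lemma vf_le_of_forall_vfLine_le {x : Fin (n + 1) → ℝ × ℝ} {k : ℕ}
    (h : ∀ u v : ℝ × ℝ, v ≠ 0 → vfLine u v x ≤ k) : vf x ≤ k :=
  csSup_le ⟨_, 0, (0, 1), by simp, rfl⟩ (by rintro _ ⟨u, v, hv, rfl⟩; exact h u v hv)

lemma sideR_neg (u v y : ℝ × ℝ) : sideR u (-v) y = -sideR u v y := by
  simp only [sideR, crossR, Prod.fst_neg, Prod.snd_neg]
  ring

lemma vfLine_neg (u v : ℝ × ℝ) (x : Fin (n + 1) → ℝ × ℝ) : vfLine u (-v) x = vfLine u v x :=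
  Nat.card_congr <| Equiv.subtypeEquivRight fun i => by
    simp only [CrossSeg, sideR_neg, neg_mul_neg, neg_eq_zero, ne_eq]

/-- Segments straddling the abscissa `c` cross the vertical line through `(c, 0)`. -/
lemma card_straddle_le_vf (x : Fin (n + 1) → ℝ × ℝ) (c : ℝ) :
    #{i : Fin n | min (x i.castSucc).1 (x i.succ).1 < c ∧ c < max (x i.castSucc).1 (x i.succ).1}
      ≤ vf x := by
  classical
  refine le_trans ?_ (vfLine_le_vf (u := (c, 0)) (v := (0, 1)) (by simp) x)
  rw [vfLine, Nat.card_eq_fintype_card, Fintype.card_subtype]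
  refine Finset.card_le_card fun i hi => ?_
  simp only [Finset.mem_filter, Finset.mem_univ, true_and, min_lt_iff, lt_max_iff] at hi ⊢
  left
  simp only [sideR, crossR, Prod.fst_sub, Prod.snd_sub]
  rcases hi with ⟨h₁ | h₁, h₂ | h₂⟩ <;> nlinarith

end VariationFactor

section OrdConnected

variable {m : ℕ} {S : Set (Fin (m + 1))}

lemma Set.OrdConnected.subsingleton_exits (hS : S.OrdConnected) :
    {i : Fin m | i.castSucc ∈ S ∧ i.succ ∉ S}.Subsingleton := by
  have key : ∀ i j : Fin m, i.castSucc ∈ S → j.castSucc ∈ S → i.succ ∉ S → ¬ i < j :=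
    fun i j hi hj hi' hij =>
      hi' (hS.out hi hj ⟨Fin.castSucc_le_succ i, Fin.succ_le_castSucc_iff.2 hij⟩)
  intro i hi j hj
  exact le_antisymm (not_lt.1 (key j i hj.1 hi.1 hj.2)) (not_lt.1 (key i j hi.1 hj.1 hi.2))

lemma Set.OrdConnected.subsingleton_entries (hS : S.OrdConnected) :
    {i : Fin m | i.castSucc ∉ S ∧ i.succ ∈ S}.Subsingleton := by
  have key : ∀ i j : Fin m, i.succ ∈ S → j.succ ∈ S → j.castSucc ∉ S → ¬ i < j :=
    fun i j hi hj hj' hij =>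
      hj' (hS.out hi hj ⟨Fin.succ_le_castSucc_iff.2 hij, Fin.castSucc_le_succ j⟩)
  intro i hi j hj
  exact le_antisymm (not_lt.1 (key j i hj.2 hi.2 hi.1)) (not_lt.1 (key i j hi.2 hj.2 hj.1))

lemma Set.OrdConnected.castSucc_mem_of_succ_mem (hS : S.OrdConnected) (h0 : 0 ∈ S)
    {i : Fin m} (hi : i.succ ∈ S) : i.castSucc ∈ S :=
  hS.out h0 hi ⟨Fin.zero_le _, Fin.castSucc_le_succ i⟩

/-- Every crossing is the exit from the open negative side, the entry into the closed one, or a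
start on the line; the last two exclude each other. -/
lemma vfLine_le_two_of_ordConnected {u v : ℝ × ℝ} {x : Fin (m + 1) → ℝ × ℝ}
    (hle : {j | sideR u v (x j) ≤ 0}.OrdConnected)
    (hlt : {j | sideR u v (x j) < 0}.OrdConnected) : vfLine u v x ≤ 2 := by
  set s := fun j => sideR u v (x j)
  have hcross : ∀ i, CrossSeg u v x i →
      (s i.castSucc < 0 ∧ ¬ s i.succ < 0) ∨ (¬ s i.castSucc ≤ 0 ∧ s i.succ ≤ 0) ∨
        ((i : ℕ) = 0 ∧ s 0 = 0) := by
    rintro i (h | ⟨h0, h⟩ | ⟨h, h'⟩)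
    · rcases mul_neg_iff.1 h with ⟨h₁, h₂⟩ | ⟨h₁, h₂⟩
      · exact Or.inr (Or.inl ⟨not_le.2 h₁, h₂.le⟩)
      · exact Or.inl ⟨h₁, not_lt.2 h₂.le⟩
    · exact Or.inr (Or.inr ⟨h0, by rwa [show i.castSucc = 0 from Fin.ext h0] at h⟩)
    · rcases h.lt_or_gt with h₁ | h₁
      · exact Or.inl ⟨h₁, not_lt.2 h'.ge⟩
      · exact Or.inr (Or.inl ⟨not_le.2 h₁, h'.le⟩)
  have hcard : ∀ A B : Set (Fin m), A.Subsingleton → B.Subsingleton →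
      {i | CrossSeg u v x i} ⊆ A ∪ B → vfLine u v x ≤ 2 := fun A B hA hB hsub =>
    calc vfLine u v x = {i | CrossSeg u v x i}.ncard := Nat.card_coe_set_eq _
      _ ≤ (A ∪ B).ncard := Set.ncard_le_ncard hsub
      _ ≤ A.ncard + B.ncard := Set.ncard_union_le A B
      _ ≤ 1 + 1 := add_le_add (Set.ncard_le_one_iff_subsingleton.2 hA)
          (Set.ncard_le_one_iff_subsingleton.2 hB)
  by_cases h0 : s 0 ≤ 0
  · refine hcard _ {i | (i : ℕ) = 0} hlt.subsingleton_exits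
      (fun i hi j hj => Fin.ext (hi.trans hj.symm)) fun i hi => ?_
    rcases hcross i hi with h | h | h
    · exact Or.inl h
    · exact absurd (hle.castSucc_mem_of_succ_mem h0 h.2) h.1
    · exact Or.inr h.1
  · refine hcard _ _ hlt.subsingleton_exits hle.subsingleton_entries fun i hi => ?_
    rcases hcross i hi with h | h | h
    · exact Or.inl h
    · exact Or.inr h
    · exact absurd h.2.le h0

end OrdConnected

/-- For `v.1 ≥ 0` the side of a graph point is a convex function of its abscissa. -/
lemma vf_graph_le_two {s : Set ℝ} {g : ℝ → ℝ} (hconv : ConvexOn ℝ s g) {m : ℕ}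
    {w : Fin (m + 1) → ℝ} (hws : ∀ j, w j ∈ s) (hw : Monotone w) :
    vf (fun j => (w j, g (w j))) ≤ 2 := by
  refine vf_le_of_forall_vfLine_le fun u v hv0 => ?_
  wlog hv : 0 ≤ v.1 generalizing v
  · rw [← vfLine_neg]
    exact this (-v) (neg_ne_zero.2 hv0) (by simp only [Prod.fst_neg]; linarith)
  have hside : ConvexOn ℝ s fun τ => sideR u v (τ, g τ) := by
    refine ⟨hconv.1, fun a ha b hb p q hp hq hpq => ?_⟩
    have hg := mul_le_mul_of_nonneg_left (hconv.2 ha hb hp hq hpq) hv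
    simp only [smul_eq_mul, sideR, crossR, Prod.fst_sub, Prod.snd_sub] at hg ⊢
    linear_combination hg + (v.1 * u.2 - v.2 * u.1) * hpq
  have hord : ∀ {P : ℝ → Prop}, Convex ℝ {τ | τ ∈ s ∧ P τ} → {j | P (w j)}.OrdConnected :=
    fun h => by simpa [Set.preimage, hws] using h.ordConnected.preimage_mono hw
  exact vfLine_le_two_of_ordConnected (hord (hside.convex_le 0)) (hord (hside.convex_lt 0))

lemma ofReal_cvar {n : ℕ} (f : ℝ × ℝ → ℂ) (x : Fin (n + 1) → ℝ × ℝ) :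
    ENNReal.ofReal (cvar f x) = ∑ i : Fin n, edist (f (x i.succ)) (f (x i.castSucc)) := by
  rw [cvar, ENNReal.ofReal_sum_of_nonneg fun i _ => norm_nonneg _]
  simp only [edist_dist, dist_eq_norm]

lemma ofReal_cvar_le_vf_mul_eVariationOn {s : Set ℝ} (g : ℝ → ℝ) (f : ℝ × ℝ → ℂ) {n : ℕ}
    {x : Fin (n + 1) → ℝ × ℝ} (hx : ∀ i, x i ∈ (fun t => (t, g t)) '' s) :
    ENNReal.ofReal (cvar f x) ≤ vf x * eVariationOn (fun t => f (t, g t)) s := by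
  choose t ht hxt using hx
  obtain rfl : x = fun i => (t i, g (t i)) := funext fun i => (hxt i).symm
  obtain ⟨N, σ, hσ, hσT⟩ :=
    (univ.image t).exists_strictMonoOn_image_Iic_eq (univ_nonempty.image _)
  have hmem : ∀ i, t i ∈ σ '' Set.Iic N := fun i => by simp [hσT]
  have hσs : ∀ j ∈ Set.Icc 0 N, σ j ∈ s := fun j hj => by
    have hj : σ j ∈ σ '' Set.Iic N := Set.mem_image_of_mem σ hj.2
    obtain ⟨i, -, hi⟩ := Finset.mem_image.1 (hσT ▸ hj)
    exact hi ▸ ht i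
  have hgrid := sum_edist_le_mul_sum_edist_grid (fun t => f (t, g t)) univ
    (fun i : Fin n => t i.castSucc) (fun i => t i.succ) hσ (fun i _ => hmem _) (fun i _ => hmem _)
    _ (card_straddle_le_vf (fun i => (t i, g (t i))))
  have hvar : ∑ j ∈ range N, edist (f (σ (j + 1), g (σ (j + 1)))) (f (σ j, g (σ j)))
      ≤ eVariationOn (fun t => f (t, g t)) s := by
    rw [Finset.range_eq_Ico]
    exact eVariationOn.sum_le_of_monotoneOn_Icc (hσ.monotoneOn.mono fun j hj => hj.2) hσs
  rw [ofReal_cvar]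
  exact hgrid.trans (by gcongr)

lemma sum_edist_le_two_mul_twoVar {s : Set ℝ} {g : ℝ → ℝ} (hconv : ConvexOn ℝ s g)
    (f : ℝ × ℝ → ℂ) (n : ℕ) {u : ℕ → ℝ} (hu : Monotone u) (hus : ∀ i, u i ∈ s) :
    ∑ i ∈ range n, edist (f (u (i + 1), g (u (i + 1)))) (f (u i, g (u i)))
      ≤ 2 * twoVar f ((fun t => (t, g t)) '' s) := by
  obtain ⟨N, σ, hσ, hσT⟩ := ((range (n + 1)).image u).exists_strictMonoOn_image_Iic_eq
    ⟨u 0, Finset.mem_image_of_mem u (Finset.mem_range.2 n.succ_pos)⟩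
  have hmem : ∀ i ∈ range (n + 1), u i ∈ σ '' Set.Iic N := fun i hi => by
    rw [hσT]
    exact Finset.mem_coe.2 (Finset.mem_image_of_mem u hi)
  have hσs : ∀ j ≤ N, σ j ∈ s := fun j hj => by
    have hj : σ j ∈ σ '' Set.Iic N := Set.mem_image_of_mem σ hj
    obtain ⟨i, -, hi⟩ := Finset.mem_image.1 (hσT ▸ hj)
    exact hi ▸ hus i
  let x : Fin (N + 1) → ℝ × ℝ := fun j => (σ j, g (σ j))
  have hvf : vf x ≤ 2 := vf_graph_le_two hconv (fun j => hσs j (Nat.lt_succ_iff.1 j.2))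
    fun j k hjk => hσ.monotoneOn (Nat.lt_succ_iff.1 j.2) (Nat.lt_succ_iff.1 k.2) hjk
  have hx : ∀ j, x j ∈ (fun t => (t, g t)) '' s := fun j =>
    ⟨σ j, hσs j (Nat.lt_succ_iff.1 j.2), rfl⟩
  have hne : ∀ j : Fin N, x j.castSucc ≠ x j.succ := fun j h =>
    (hσ (Set.mem_Iic.2 j.2.le) (Set.mem_Iic.2 j.2) (Nat.lt_succ_self j)).ne (congrArg Prod.fst h)
  calc ∑ i ∈ range n, edist (f (u (i + 1), g (u (i + 1)))) (f (u i, g (u i)))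
      ≤ (1 : ℕ) * ∑ j ∈ range N, edist (f (σ (j + 1), g (σ (j + 1)))) (f (σ j, g (σ j))) :=
        sum_edist_le_mul_sum_edist_grid (fun t => f (t, g t)) (range n) u (fun i => u (i + 1)) hσ
          (fun i hi => hmem i (Finset.mem_range.2 (Nat.lt_succ_of_lt (Finset.mem_range.1 hi))))
          (fun i hi => hmem (i + 1) (Finset.mem_range.2 (Nat.succ_lt_succ (Finset.mem_range.1 hi))))
          1
          (hu.card_straddle_le_one n)
    _ = ENNReal.ofReal (cvar f x) := by
        rw [Nat.cast_one, one_mul, ofReal_cvar, ← Fin.sum_univ_eq_sum_range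
          (fun j => edist (f (σ (j + 1), g (σ (j + 1)))) (f (σ j, g (σ j))))]
        rfl
    _ = 2 * (ENNReal.ofReal (cvar f x) / 2) :=
        (ENNReal.mul_div_cancel two_ne_zero ENNReal.ofNat_ne_top).symm
    _ ≤ 2 * (ENNReal.ofReal (cvar f x) / vf x) := by
        gcongr
        exact_mod_cast hvf
    _ ≤ 2 * twoVar f ((fun t => (t, g t)) '' s) := by
        gcongr
        exact le_iSup_of_le N <| le_iSup_of_le x <| le_iSup_of_le hx <| le_iSup_of_le hne le_rfl

theorem stmt15_general (g : ℝ → ℝ)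
    (hconv : ConvexOn ℝ (Set.Icc 0 1) g)
    (C : Set (ℝ × ℝ)) (hC : C = (fun t => (t, g t)) '' Set.Icc 0 1)
    (f : ℝ × ℝ → ℂ) :
    twoVar f C ≤ eVariationOn (fun t => f (t, g t)) (Set.Icc 0 1) ∧
    eVariationOn (fun t => f (t, g t)) (Set.Icc 0 1) ≤ 2 * twoVar f C := by
  subst hC
  constructor
  · refine iSup_le fun n => iSup_le fun x => iSup_le fun hx => iSup_le fun _ => ?_
    exact ENNReal.div_le_of_le_mul <|
      (ofReal_cvar_le_vf_mul_eVariationOn g f hx).trans_eq (mul_comm _ _)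
  · exact iSup_le fun ⟨n, u, hu, hus⟩ => sum_edist_le_two_mul_twoVar hconv f n hu hus

theorem stmt15 (g : ℝ → ℝ) (hgc : ContinuousOn g (Set.Icc 0 1))
    (hconv : ConvexOn ℝ (Set.Icc 0 1) g)
    (C : Set (ℝ × ℝ)) (hC : C = (fun t => (t, g t)) '' Set.Icc 0 1)
    (f : ℝ × ℝ → ℂ) :
    twoVar f C ≤ eVariationOn (fun t => f (t, g t)) (Set.Icc 0 1) ∧
    eVariationOn (fun t => f (t, g t)) (Set.Icc 0 1) ≤ 2 * twoVar f C :=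
  stmt15_general g hconv C hC f
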